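/- arXiv:2409.16610 — 7 statements merged into one kernel-verified Lean document; each statement's English description precedes it below -/
import Mathlib

section
/- If f(z) = Σ_{s=0}^∞ a_s z^s is holomorphic on the unit disk 𝔻 with |f(z)| < 1 for all z ∈ 𝔻, then Σ_{s=0}^∞ |a_s| r^s ≤ 1 for all 0 ≤ r ≤ 1/3. -/
open Metric Finset Set

private lemma bohr_root_in_ball {w : ℂ} (hw : ‖w‖ < 1) {n : ℕ} (hn : 0 < n) :
    ∃ z : ℂ, z ^ n = w ∧ ‖z‖ < 1 := by
  obtain ⟨z, hz⟩ := Complex.isAlgClosed.exists_pow_nat_eq w hn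
  refine ⟨z, hz, ?_⟩
  by_contra h
  push_neg at h
  have : (1:ℝ) ≤ ‖z‖ ^ n := one_le_pow₀ h
  rw [← norm_pow, hz] at this
  linarith

private lemma bohr_avg_hasSum {f : ℂ → ℂ} {a : ℕ → ℂ}
    (hf : ∀ z ∈ ball (0 : ℂ) 1, HasSum (fun s : ℕ => a s * z ^ s) (f z))
    {n : ℕ} (hn : 0 < n) {z : ℂ} (hz : ‖z‖ < 1) :
    HasSum (fun m : ℕ => a (n * m) * (z ^ n) ^ m)
      ((n : ℂ)⁻¹ * ∑ k ∈ range n, f (Complex.exp (2 * Real.pi * Complex.I / n) ^ k * z)) := by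
  set ζ : ℂ := Complex.exp (2 * Real.pi * Complex.I / n) with hζdef
  have hζ : IsPrimitiveRoot ζ n := Complex.isPrimitiveRoot_exp n hn.ne'
  have hζabs : ‖ζ‖ = 1 := by
    rw [hζdef, Complex.norm_exp]
    norm_num [Complex.div_re]
  have habs : ∀ k : ℕ, ‖ζ ^ k * z‖ < 1 := by
    intro k
    rw [norm_mul, norm_pow, hζabs, one_pow, one_mul]
    exact hz
  have hsum : HasSum (fun s : ℕ => ∑ k ∈ range n, a s * (ζ ^ k * z) ^ s)
      (∑ k ∈ range n, f (ζ ^ k * z)) :=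
    hasSum_sum fun k _ => hf _ (by simpa using habs k)
  have key : ∀ s : ℕ, (∑ k ∈ range n, a s * (ζ ^ k * z) ^ s) =
      if n ∣ s then (n : ℂ) * (a s * z ^ s) else 0 := by
    intro s
    have : ∀ k, a s * (ζ ^ k * z) ^ s = (ζ ^ s) ^ k * (a s * z ^ s) := by
      intro k; rw [mul_pow, ← pow_mul, ← pow_mul, mul_comm k s, pow_mul]; ring
    simp_rw [this, ← Finset.sum_mul]
    by_cases hd : n ∣ s
    · rw [if_pos hd]
      have h1 : ζ ^ s = 1 := (hζ.pow_eq_one_iff_dvd s).mpr hd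
      simp [h1]
    · rw [if_neg hd]
      have h1 : ζ ^ s ≠ 1 := fun h => hd ((hζ.pow_eq_one_iff_dvd s).mp h)
      rw [geom_sum_eq h1, ← pow_mul, mul_comm s n, pow_mul, hζ.pow_eq_one, one_pow]
      simp
  rw [funext key] at hsum
  have hinj : Function.Injective (fun m : ℕ => n * m) := fun x y h => by
    simpa [Nat.mul_right_inj hn.ne'] using h
  have hzero : ∀ s : ℕ, s ∉ Set.range (fun m : ℕ => n * m) →
      (if n ∣ s then (n : ℂ) * (a s * z ^ s) else 0) = 0 := by
    intro s hs
    rw [if_neg]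
    intro ⟨m, hm⟩
    exact hs ⟨m, hm.symm⟩
  have hsum2 := (hinj.hasSum_iff hzero).mpr hsum
  have hcomp : ((fun s => if n ∣ s then (n : ℂ) * (a s * z ^ s) else 0) ∘ fun m => n * m)
      = fun m : ℕ => (n : ℂ) * (a (n * m) * (z ^ n) ^ m) := by
    funext m
    simp only [Function.comp_apply, if_pos (Dvd.intro m rfl), ← pow_mul]
  rw [hcomp] at hsum2
  have hn' : (n : ℂ) ≠ 0 := Nat.cast_ne_zero.mpr hn.ne'
  have := hsum2.mul_left (n : ℂ)⁻¹
  simpa [← mul_assoc, inv_mul_cancel₀ hn'] using this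

private lemma bohr_avg_bound {f : ℂ → ℂ} {a : ℕ → ℂ}
    (hf : ∀ z ∈ ball (0 : ℂ) 1, HasSum (fun s : ℕ => a s * z ^ s) (f z))
    (hb : ∀ z ∈ ball (0 : ℂ) 1, ‖f z‖ < 1)
    {n : ℕ} (hn : 0 < n) {z : ℂ} (hz : ‖z‖ < 1) :
    ∃ T : ℂ, HasSum (fun m : ℕ => a (n * m) * (z ^ n) ^ m) T ∧ ‖T‖ < 1 := by
  have avg := bohr_avg_hasSum hf hn hz
  set ζ : ℂ := Complex.exp (2 * Real.pi * Complex.I / n) with hζdef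
  have hζabs : ‖ζ‖ = 1 := by
    rw [hζdef, Complex.norm_exp]
    norm_num [Complex.div_re]
  refine ⟨_, avg, ?_⟩
  have habs : ∀ k : ℕ, ‖ζ ^ k * z‖ < 1 := by
    intro k; rw [norm_mul, norm_pow, hζabs, one_pow, one_mul]; exact hz
  have hlt : ∑ k ∈ range n, ‖f (ζ ^ k * z)‖ < ∑ _k ∈ range n, (1:ℝ) := by
    refine Finset.sum_lt_sum_of_nonempty (Finset.nonempty_range_iff.mpr hn.ne') ?_
    intro k _
    exact hb _ (by simpa using habs k)
  have h1 : ‖∑ k ∈ range n, f (ζ ^ k * z)‖ < n := by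
    calc ‖∑ k ∈ range n, f (ζ ^ k * z)‖ ≤ ∑ k ∈ range n, ‖f (ζ ^ k * z)‖ := norm_sum_le _ _
    _ < ∑ _k ∈ range n, (1:ℝ) := hlt
    _ = n := by simp
  rw [norm_mul, norm_inv]
  have hn' : (0:ℝ) < n := Nat.cast_pos.mpr hn
  rw [Complex.norm_natCast]
  have := mul_lt_mul_of_pos_left h1 (inv_pos.mpr hn')
  rwa [inv_mul_cancel₀ hn'.ne'] at this

private lemma bohr_schwarz_pick_zero {h : ℂ → ℂ}
    (hdiff : DifferentiableOn ℂ h (ball 0 1))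
    (hmap : MapsTo h (ball (0:ℂ) 1) (ball (0:ℂ) 1)) :
    ‖deriv h 0‖ ≤ 1 - ‖h 0‖ ^ 2 := by
  classical
  have h0mem : (0:ℂ) ∈ ball (0:ℂ) 1 := by simp
  set α : ℂ := h 0 with hα_def
  have hα : ‖α‖ < 1 := by simpa using hmap h0mem
  have hnsq : Complex.normSq α < 1 := by
    have : Complex.normSq α = ‖α‖ ^ 2 := (Complex.sq_norm α).symm
    nlinarith [norm_nonneg α]
  set φ : ℂ → ℂ := fun w => (α - w) / (1 - (starRingEnd ℂ) α * w) with hφ_def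
  have dne : ∀ w : ℂ, ‖w‖ < 1 → 1 - (starRingEnd ℂ) α * w ≠ 0 := by
    intro w hw heq
    have h1 : (starRingEnd ℂ) α * w = 1 := by linear_combination -heq
    have h2 : ‖(starRingEnd ℂ) α * w‖ < 1 := by
      rw [norm_mul, RCLike.norm_conj]
      nlinarith [norm_nonneg α, norm_nonneg w]
    rw [h1] at h2; simp at h2
  have φdiff : DifferentiableOn ℂ φ (ball 0 1) := by
    apply DifferentiableOn.div
    · fun_prop
    · fun_prop
    · intro w hw; exact dne w (by simpa using hw)
  have φmaps : MapsTo φ (ball (0:ℂ) 1) (ball (0:ℂ) 1) := by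
    intro w hw
    have hw' : ‖w‖ < 1 := by simpa using hw
    have hwsq : Complex.normSq w < 1 := by
      have : Complex.normSq w = ‖w‖ ^ 2 := (Complex.sq_norm w).symm
      nlinarith [norm_nonneg w]
    have key : Complex.normSq (α - w) < Complex.normSq (1 - (starRingEnd ℂ) α * w) := by
      simp only [Complex.normSq_apply, Complex.sub_re, Complex.sub_im, Complex.mul_re,
        Complex.mul_im, Complex.conj_re, Complex.conj_im, Complex.one_re, Complex.one_im]
      simp only [Complex.normSq_apply] at hnsq hwsq
      nlinarith [sq_nonneg (α.re - w.re), sq_nonneg (α.im - w.im)]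
    have hpos : 0 < ‖1 - (starRingEnd ℂ) α * w‖ :=
      norm_pos_iff.mpr (dne w hw')
    simp only [mem_ball, dist_zero_right]
    rw [hφ_def]
    simp only [norm_div]
    rw [div_lt_one hpos]
    have := Real.sqrt_lt_sqrt (Complex.normSq_nonneg _) key
    rwa [← Complex.norm_def, ← Complex.norm_def] at this
  set F : ℂ → ℂ := φ ∘ h with hF_def
  have F0 : F 0 = 0 := by
    simp [hF_def, hφ_def, ← hα_def]
  have Fdiff : DifferentiableOn ℂ F (ball 0 1) := φdiff.comp hdiff hmap
  have Fmaps : MapsTo F (ball (0:ℂ) 1) (ball (0:ℂ) 1) := φmaps.comp hmap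
  have schwarz : ‖deriv F 0‖ ≤ 1 := by
    have := Complex.norm_deriv_le_div_of_mapsTo_ball (R₂ := 1) Fdiff
      (by rw [F0]; exact Fmaps.mono_right ball_subset_closedBall) one_pos
    simpa using this
  set d : ℂ := 1 - (starRingEnd ℂ) α * α with hd_def
  have hdreal : d = ((1 - Complex.normSq α : ℝ) : ℂ) := by
    rw [hd_def]
    push_cast
    rw [mul_comm, Complex.mul_conj]
  have hdne : d ≠ 0 := by
    rw [hdreal]
    simp only [ne_eq, Complex.ofReal_eq_zero]
    linarith
  have hu : HasDerivAt (fun w : ℂ => α - w) (-1) α := (hasDerivAt_id α).const_sub α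
  have hv : HasDerivAt (fun w : ℂ => 1 - (starRingEnd ℂ) α * w) (-((starRingEnd ℂ) α)) α := by
    have := ((hasDerivAt_id α).const_mul ((starRingEnd ℂ) α)).const_sub (1:ℂ)
    simpa using this
  have hφd : HasDerivAt φ ((-1 * d - (α - α) * -((starRingEnd ℂ) α)) / d ^ 2) α := hu.div hv hdne
  have hφval : deriv φ α = -(1 / d) := by
    rw [hφd.deriv]
    field_simp
    ring
  have hdiffat : DifferentiableAt ℂ h 0 := hdiff.differentiableAt (isOpen_ball.mem_nhds h0mem)
  have φdiffat : DifferentiableAt ℂ φ α :=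
    φdiff.differentiableAt (isOpen_ball.mem_nhds (by simpa using hα))
  have hFderiv : deriv F 0 = deriv φ α * deriv h 0 := by
    rw [hF_def, deriv_comp 0 φdiffat hdiffat, ← hα_def]
  have hnormd : ‖d‖ = 1 - Complex.normSq α := by
    rw [hdreal, Complex.norm_real, Real.norm_of_nonneg (by linarith)]
  have hfinal : ‖deriv h 0‖ / (1 - Complex.normSq α) ≤ 1 := by
    calc ‖deriv h 0‖ / (1 - Complex.normSq α) = ‖deriv φ α‖ * ‖deriv h 0‖ := by
          rw [hφval]
          simp only [norm_neg, norm_div, norm_one, hnormd]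
          ring
    _ = ‖deriv F 0‖ := by rw [hFderiv, norm_mul]
    _ ≤ 1 := schwarz
  have : ‖deriv h 0‖ ≤ 1 - Complex.normSq α := by
    rw [div_le_one (by linarith)] at hfinal
    linarith
  rwa [← Complex.sq_norm] at this

private lemma bohr_coeff_bound {f : ℂ → ℂ} {a : ℕ → ℂ}
    (hf : ∀ z ∈ ball (0 : ℂ) 1, HasSum (fun s : ℕ => a s * z ^ s) (f z))
    (hb : ∀ z ∈ ball (0 : ℂ) 1, ‖f z‖ < 1)
    {n : ℕ} (hn : 0 < n) :
    ‖a n‖ ≤ 1 - ‖a 0‖ ^ 2 := by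
  set b : ℕ → ℂ := fun m => a (n * m) with hb_def
  set p := FormalMultilinearSeries.ofScalars ℂ b with hp_def
  set h : ℂ → ℂ := fun w => ∑' m : ℕ, b m * w ^ m with hh_def
  have hinj : Function.Injective (fun m : ℕ => n * m) := fun x y hxy => by
    simpa [Nat.mul_right_inj hn.ne'] using hxy
  have hsumm : ∀ {w : ℂ}, ‖w‖ < 1 → Summable (fun m : ℕ => b m * w ^ m) := by
    intro w hw
    obtain ⟨z, hzn, hz⟩ := bohr_root_in_ball hw hn
    have h1 : Summable (fun s : ℕ => a s * z ^ s) := (hf z (by simpa using hz)).summable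
    have h2 := h1.comp_injective hinj
    have : ((fun s : ℕ => a s * z ^ s) ∘ fun m => n * m) = fun m : ℕ => b m * w ^ m := by
      funext m
      simp only [Function.comp_apply, hb_def, ← hzn, ← pow_mul]
    rwa [this] at h2
  have hhasSum : ∀ {w : ℂ}, ‖w‖ < 1 → HasSum (fun m : ℕ => b m * w ^ m) (h w) :=
    fun hw => (hsumm hw).hasSum
  have hrad : 1 ≤ p.radius := by
    apply ENNReal.le_of_forall_nnreal_lt
    intro r hr
    have hr1 : (r : ℝ) < 1 := by exact_mod_cast hr
    apply p.le_radius_of_summable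
    obtain ⟨z, hzn, hz⟩ := bohr_root_in_ball (w := (r : ℂ)) (by simpa using hr1) hn
    have h1 : Summable (fun s : ℕ => ‖a s * z ^ s‖) :=
      summable_norm_iff.mpr (hf z (by simpa using hz)).summable
    have h2 := h1.comp_injective hinj
    have key : ((fun s : ℕ => ‖a s * z ^ s‖) ∘ fun m => n * m)
        = fun m : ℕ => ‖p m‖ * (r : ℝ) ^ m := by
      funext m
      have hzr : ‖z‖ ^ n = (r : ℝ) := by
        rw [← norm_pow, hzn, Complex.norm_real]
        exact abs_of_nonneg r.coe_nonneg
      simp only [Function.comp_apply, norm_mul, norm_pow, hp_def,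
        FormalMultilinearSeries.ofScalars_norm, ← hzr, ← pow_mul]
      rfl
    rwa [key] at h2
  have P : HasFPowerSeriesOnBall h p 0 1 := by
    refine ⟨hrad, one_pos, ?_⟩
    intro y hy
    have hy' : ‖y‖ < 1 := by
      simpa [edist_eq_enorm_sub, ← ENNReal.coe_one, ENNReal.coe_lt_coe,
        ← NNReal.coe_lt_coe] using hy
    rw [zero_add]
    have := hhasSum hy'
    convert this using 2 with m
    · rfl
    simp [hp_def, FormalMultilinearSeries.coeff, FormalMultilinearSeries.ofScalars, mul_comm]
  have h00 : h 0 = b 0 := by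
    have h1 := hhasSum (w := 0) (by norm_num)
    have h2 : HasSum (fun m : ℕ => b m * (0:ℂ) ^ m) (b 0) := by
      have := hasSum_single (f := fun m : ℕ => b m * (0:ℂ) ^ m) 0
        (fun m hm => by simp [zero_pow hm])
      simpa using this
    exact h1.unique h2
  have h0 : h 0 = a 0 := by rw [h00]; simp [hb_def]
  have hderiv : deriv h 0 = a n := by
    rw [P.hasFPowerSeriesAt.deriv]
    simp [hp_def, FormalMultilinearSeries.ofScalars, hb_def]
  have hball : Metric.eball (0:ℂ) 1 = ball (0:ℂ) 1 := by
    have e1 : (1:ENNReal) = ((1:NNReal):ENNReal) := rfl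
    rw [e1, Metric.eball_coe, NNReal.coe_one]
  have hdiff : DifferentiableOn ℂ h (ball 0 1) := hball ▸ P.differentiableOn
  have hmap : Set.MapsTo h (ball (0:ℂ) 1) (ball (0:ℂ) 1) := by
    intro w hw
    have hw' : ‖w‖ < 1 := by simpa using hw
    obtain ⟨z, hzn, hz⟩ := bohr_root_in_ball hw' hn
    obtain ⟨T, hT, hTlt⟩ := bohr_avg_bound hf hb hn hz
    rw [hzn] at hT
    have : h w = T := (hhasSum hw').unique hT
    simpa [this] using hTlt
  have := bohr_schwarz_pick_zero hdiff hmap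
  rwa [hderiv, h0] at this

set_option maxHeartbeats 1000000 in
theorem bohr_inequality
    (f : ℂ → ℂ) (a : ℕ → ℂ)
    (hf : ∀ z ∈ ball (0 : ℂ) 1, HasSum (fun s : ℕ => a s * z ^ s) (f z))
    (hb : ∀ z ∈ ball (0 : ℂ) 1, ‖f z‖ < 1) :
    ∀ r : ℝ, 0 ≤ r → r ≤ 1 / 3 → (∑' s : ℕ, ‖a s‖ * r ^ s) ≤ 1 := by
  intro r hr0 hr13
  have hr1 : r < 1 := by linarith
  -- a 0 = f 0 and its bound
  have hf0 : f 0 = a 0 := by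
    have h1 := hf 0 (by simp)
    have h2 : HasSum (fun s : ℕ => a s * (0:ℂ) ^ s) (a 0) := by
      have := hasSum_single (f := fun s : ℕ => a s * (0:ℂ) ^ s) 0
        (fun s hs => by simp [zero_pow hs])
      simpa using this
    exact h1.unique h2
  have hA : ‖a 0‖ < 1 := by rw [← hf0]; exact hb 0 (by simp)
  have hA0 : (0:ℝ) ≤ ‖a 0‖ := norm_nonneg _
  -- summability
  have hS : Summable (fun s : ℕ => ‖a s‖ * r ^ s) := by
    have h1 : Summable (fun s : ℕ => ‖a s * ((r:ℝ):ℂ) ^ s‖) :=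
      summable_norm_iff.mpr (hf _ (by simpa [abs_of_nonneg hr0] using hr1)).summable
    have : (fun s : ℕ => ‖a s * ((r:ℝ):ℂ) ^ s‖) = fun s : ℕ => ‖a s‖ * r ^ s := by
      funext s
      rw [norm_mul, norm_pow, Complex.norm_real, Real.norm_of_nonneg hr0]
    rwa [this] at h1
  have hStail : Summable (fun s : ℕ => ‖a (s + 1)‖ * r ^ (s + 1)) :=
    ((summable_nat_add_iff 1).mpr hS)
  -- geometric majorant
  have hgeo : Summable (fun s : ℕ => (1 - ‖a 0‖ ^ 2) * (1 / 3 : ℝ) ^ (s + 1)) := by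
    apply Summable.mul_left
    exact ((summable_geometric_of_lt_one (by norm_num) (by norm_num)).comp_injective
      (add_left_injective 1))
  have hcoeff : ∀ s : ℕ, ‖a (s + 1)‖ ≤ 1 - ‖a 0‖ ^ 2 :=
    fun s => bohr_coeff_bound hf hb (Nat.succ_pos s)
  have htail : (∑' s : ℕ, ‖a (s + 1)‖ * r ^ (s + 1)) ≤ (1 - ‖a 0‖ ^ 2) / 2 := by
    have hbd : ∀ s : ℕ, ‖a (s + 1)‖ * r ^ (s + 1) ≤ (1 - ‖a 0‖ ^ 2) * (1 / 3 : ℝ) ^ (s + 1) := by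
      intro s
      apply mul_le_mul (hcoeff s) (pow_le_pow_left₀ hr0 hr13 _) (pow_nonneg hr0 _)
      nlinarith
    calc (∑' s : ℕ, ‖a (s + 1)‖ * r ^ (s + 1))
        ≤ ∑' s : ℕ, (1 - ‖a 0‖ ^ 2) * (1 / 3 : ℝ) ^ (s + 1) := Summable.tsum_le_tsum hbd hStail hgeo
    _ = (1 - ‖a 0‖ ^ 2) * ∑' s : ℕ, (1 / 3 : ℝ) ^ (s + 1) := tsum_mul_left
    _ = (1 - ‖a 0‖ ^ 2) * ((1 / 3) * ∑' s : ℕ, (1 / 3 : ℝ) ^ s) := by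
        congr 1
        rw [← tsum_mul_left]
        congr 1
        funext s
        rw [pow_succ]
        ring
    _ = (1 - ‖a 0‖ ^ 2) / 2 := by
        rw [tsum_geometric_of_lt_one (by norm_num) (by norm_num)]
        ring
  have hsplit : (∑' s : ℕ, ‖a s‖ * r ^ s)
      = ‖a 0‖ + ∑' s : ℕ, ‖a (s + 1)‖ * r ^ (s + 1) := by
    rw [hS.tsum_eq_zero_add]
    simp
  rw [hsplit]
  nlinarith [sq_nonneg (1 - ‖a 0‖), htail]
end

section
/- Let p, m be integers with 1 ≤ m ≤ p and let φ(r) = 5r^{2p+m} − 2r^{p+m} + r^m + 4r^{2p} − 4r^p. Then φ(1/3^{1/p}) < 0 and φ(1) > 0; consequently φ has a root in the open interval (1/3^{1/p}, 1). -/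
theorem root_exists_m_pos (p m : ℕ) (hm : 1 ≤ m) (hmp : m ≤ p) :
    (fun r : ℝ => 5 * r ^ (2 * p + m) - 2 * r ^ (p + m) + r ^ m + 4 * r ^ (2 * p) - 4 * r ^ p)
        ((1 / 3 : ℝ) ^ ((1 : ℝ) / p)) < 0 ∧
    (fun r : ℝ => 5 * r ^ (2 * p + m) - 2 * r ^ (p + m) + r ^ m + 4 * r ^ (2 * p) - 4 * r ^ p)
        1 > 0 ∧
    ∃ r ∈ Set.Ioo ((1 / 3 : ℝ) ^ ((1 : ℝ) / p)) 1,
      5 * r ^ (2 * p + m) - 2 * r ^ (p + m) + r ^ m + 4 * r ^ (2 * p) - 4 * r ^ p = 0 := by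
  have hp : 1 ≤ p := le_trans hm hmp
  have hp0 : (0 : ℝ) < p := by positivity
  set a : ℝ := (1 / 3 : ℝ) ^ ((1 : ℝ) / p) with ha
  have ha0 : 0 < a := Real.rpow_pos_of_pos (by norm_num) _
  have hap : a ^ p = 1 / 3 := by
    rw [ha, ← Real.rpow_natCast ((1/3 : ℝ) ^ ((1:ℝ)/p)) p,
      ← Real.rpow_mul (by norm_num : (0:ℝ) ≤ 1/3)]
    have h1 : (1 / (p:ℝ)) * p = 1 := by field_simp
    rw [h1, Real.rpow_one]
  have ha1 : a < 1 := by
    exact Real.rpow_lt_one (by norm_num) (by norm_num) (by positivity)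
  have ham : a ^ m < 1 := pow_lt_one₀ (le_of_lt ha0) ha1 (by omega)
  have hfa : 5 * a ^ (2 * p + m) - 2 * a ^ (p + m) + a ^ m + 4 * a ^ (2 * p) - 4 * a ^ p < 0 := by
    have h2p : a ^ (2 * p) = 1 / 9 := by
      rw [two_mul, pow_add, hap]; norm_num
    rw [pow_add, pow_add, h2p, hap]
    nlinarith [ham]
  have hf1 : (5 : ℝ) * 1 ^ (2 * p + m) - 2 * 1 ^ (p + m) + 1 ^ m + 4 * 1 ^ (2 * p) - 4 * 1 ^ p > 0 := by
    simp
    norm_num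
  refine ⟨hfa, hf1, ?_⟩
  have hcont : ContinuousOn
      (fun r : ℝ => 5 * r ^ (2 * p + m) - 2 * r ^ (p + m) + r ^ m + 4 * r ^ (2 * p) - 4 * r ^ p)
      (Set.Icc a 1) := by
    apply Continuous.continuousOn; continuity
  have hsub := intermediate_value_Ioo (le_of_lt ha1) hcont
  have h0 : (0 : ℝ) ∈ Set.Ioo
      ((fun r : ℝ => 5 * r ^ (2 * p + m) - 2 * r ^ (p + m) + r ^ m + 4 * r ^ (2 * p) - 4 * r ^ p) a)
      ((fun r : ℝ => 5 * r ^ (2 * p + m) - 2 * r ^ (p + m) + r ^ m + 4 * r ^ (2 * p) - 4 * r ^ p) 1) := by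
    exact ⟨hfa, hf1⟩
  obtain ⟨r, hr, hr0⟩ := hsub h0
  exact ⟨r, hr, hr0⟩
end

section
/- Let f(z) = Σ_{s=0}^∞ a_s z^s be holomorphic on 𝔻 with |f(z)| ≤ 1. Then for 0 ≤ r ≤ 1/3: Σ_{s=0}^∞ |a_s| r^s + (1/(1+|a_0|) + r/(1−r)) Σ_{s=1}^∞ |a_s|² r^{2s} ≤ 1. -/
open Metric

open FormalMultilinearSeries

lemma hasFPS (g : ℂ → ℂ) (b : ℕ → ℂ)
    (hg : ∀ z ∈ ball (0:ℂ) 1, HasSum (fun s => b s * z ^ s) (g z)) :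
    HasFPowerSeriesOnBall g (ofScalars ℂ b) 0 1 := by
  constructor
  · refine ENNReal.le_of_forall_nnreal_lt (fun ρ hρ => ?_)
    have hρ1 : (ρ : ℝ) < 1 := by exact_mod_cast hρ
    have h := (hg (ρ : ℝ) (by simpa using hρ1)).summable.tendsto_atTop_zero
    apply le_radius_of_tendsto _ (l := 0)
    have := (h.norm)
    simp only [norm_zero] at this
    convert this using 2 with n
    rw [ofScalars_norm, norm_mul, norm_pow]
    norm_num
  · exact one_pos
  · intro y hy
    rw [EMetric.mem_ball, edist_zero_right] at hy
    have hy1 : ‖y‖ < 1 := by rw [← ofReal_norm, ENNReal.ofReal_lt_one] at hy; exact hy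
    have := hg y (by simpa using hy1)
    rw [zero_add]
    refine this.congr_fun (fun n => ?_)
    have h1 : (fun _ : Fin n => y) = fun _ => y := rfl
    rw [ofScalars_apply_eq]
    simp [mul_comm]

lemma coeff_ofScalars (b : ℕ → ℂ) (n : ℕ) : (ofScalars ℂ b).coeff n = b n := by
  rw [coeff]
  have : (1 : Fin n → ℂ) = fun _ => (1:ℂ) := rfl
  rw [this, ofScalars_apply_eq]
  simp

lemma mobius_bound {c u : ℂ} (hc : ‖c‖ ≤ 1) (hu : ‖u‖ ≤ 1) :
    ‖u - c‖ ≤ ‖1 - (starRingEnd ℂ) c * u‖ := by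
  have h1 : ‖u - c‖ ^ 2 = Complex.normSq (u - c) := by
    rw [Complex.sq_norm]
  have h2 : ‖1 - (starRingEnd ℂ) c * u‖ ^ 2 = Complex.normSq (1 - (starRingEnd ℂ) c * u) := by
    rw [Complex.sq_norm]
  have key : Complex.normSq (1 - (starRingEnd ℂ) c * u) - Complex.normSq (u - c)
      = (1 - Complex.normSq c) * (1 - Complex.normSq u) := by
    simp [Complex.normSq_sub, Complex.normSq_mul, Complex.normSq_conj, Complex.normSq_one]
    ring_nf
  have hcn : Complex.normSq c ≤ 1 := by
    rw [← Complex.sq_norm]; nlinarith [norm_nonneg c]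
  have hun : Complex.normSq u ≤ 1 := by
    rw [← Complex.sq_norm]; nlinarith [norm_nonneg u]
  nlinarith [norm_nonneg (u - c), norm_nonneg (1 - (starRingEnd ℂ) c * u)]

lemma deriv_bound (g : ℂ → ℂ) (hd : DifferentiableOn ℂ g (ball 0 1)) (h0 : g 0 = 0)
    (hbd : ∀ z ∈ ball (0:ℂ) 1, ‖g z‖ ≤ 1) : ‖deriv g 0‖ ≤ 1 := by
  refine le_of_forall_pos_le_add (fun ε hε => ?_)
  have hmaps : Set.MapsTo g (ball 0 1) (ball (g 0) (1 + ε)) := by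
    intro z hz
    rw [mem_ball, dist_eq_norm, h0, sub_zero]
    exact lt_of_le_of_lt (hbd z hz) (by linarith)
  have := Complex.norm_deriv_le_div_of_mapsTo_ball hd (hmaps.mono_right ball_subset_closedBall) one_pos
  simpa using this

lemma avg_lemma (f : ℂ → ℂ) (a : ℕ → ℂ)
    (hf : ∀ z ∈ ball (0 : ℂ) 1, HasSum (fun s : ℕ => a s * z ^ s) (f z))
    (hb : ∀ z ∈ ball (0 : ℂ) 1, ‖f z‖ ≤ 1)
    (n : ℕ) (hn : 1 ≤ n) (w : ℂ) (hw : ‖w‖ < 1) :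
    ∃ T : ℂ, HasSum (fun j : ℕ => a (n * j) * w ^ j) T ∧ ‖T‖ ≤ 1 := by
  have hnne : n ≠ 0 := by omega
  have hn0 : (n : ℂ) ≠ 0 := Nat.cast_ne_zero.mpr hnne
  set z : ℂ := w ^ ((n : ℂ)⁻¹) with hzdef
  have hzn : z ^ n = w := Complex.cpow_nat_inv_pow w hnne
  have hz1 : ‖z‖ < 1 := by
    by_contra h
    push_neg at h
    have : (1:ℝ) ≤ ‖z‖ ^ n := one_le_pow₀ h
    rw [← norm_pow, hzn] at this; linarith
  set ζ : ℂ := Complex.exp (2 * Real.pi * Complex.I / n) with hζdef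
  have hζ : IsPrimitiveRoot ζ n := Complex.isPrimitiveRoot_exp n hnne
  have hζ1 : ‖ζ‖ = 1 := by
    have h1 : ‖ζ‖ ^ n = 1 ^ n := by rw [← norm_pow, hζ.pow_eq_one, norm_one, one_pow]
    exact (pow_left_inj₀ (norm_nonneg _) zero_le_one hnne).mp h1
  have hmem : ∀ k : ℕ, ζ ^ k * z ∈ ball (0:ℂ) 1 := by
    intro k
    simp only [mem_ball, dist_zero_right, norm_mul, norm_pow, hζ1, one_pow, one_mul]
    exact hz1
  have hk : ∀ k ∈ Finset.range n,
      HasSum (fun s : ℕ => a s * (ζ ^ k * z) ^ s) (f (ζ ^ k * z)) :=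
    fun k _ => hf _ (hmem k)
  have hsum := hasSum_sum hk
  set T : ℂ := ∑ k ∈ Finset.range n, f (ζ ^ k * z) with hT
  have hroots : ∀ s : ℕ, (∑ k ∈ Finset.range n, (ζ ^ s) ^ k)
      = if n ∣ s then (n : ℂ) else 0 := by
    intro s
    by_cases hd : n ∣ s
    · rw [if_pos hd]
      have : ζ ^ s = 1 := (hζ.pow_eq_one_iff_dvd s).mpr hd
      simp [this]
    · rw [if_neg hd]
      have hne : ζ ^ s ≠ 1 := fun h => hd ((hζ.pow_eq_one_iff_dvd s).mp h)
      rw [geom_sum_eq hne]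
      have : (ζ ^ s) ^ n = 1 := by
        rw [← pow_mul, mul_comm, pow_mul, hζ.pow_eq_one, one_pow]
      simp [this]
  have hsum2 : HasSum (fun s : ℕ => if n ∣ s then (n:ℂ) * (a s * z ^ s) else 0) T := by
    refine hsum.congr_fun (fun s => ?_)
    have : ∀ k, a s * (ζ ^ k * z) ^ s = (a s * z ^ s) * (ζ ^ s) ^ k := by
      intro k
      rw [mul_pow, ← pow_mul, mul_comm k s, pow_mul]
      ring
    rw [Finset.sum_congr rfl (fun k _ => this k), ← Finset.mul_sum, hroots]
    split_ifs <;> ring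
  have hinj : Function.Injective (fun j : ℕ => n * j) := fun x y h => by
    simpa [hnne] using h
  have hzero : ∀ s, s ∉ Set.range (fun j : ℕ => n * j) →
      (if n ∣ s then (n:ℂ) * (a s * z ^ s) else 0) = 0 := by
    intro s hs
    rw [if_neg]
    rintro ⟨j, rfl⟩
    exact hs ⟨j, rfl⟩
  have hsum3 := (hinj.hasSum_iff hzero).mpr hsum2
  have hsum4 : HasSum (fun j : ℕ => (n:ℂ) * (a (n * j) * w ^ j)) T := by
    refine hsum3.congr_fun (fun j => ?_)
    simp only [Function.comp]
    rw [if_pos ⟨j, rfl⟩, pow_mul, hzn]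
  have hsum5 : HasSum (fun j : ℕ => a (n * j) * w ^ j) (T / n) := by
    have := hsum4.div_const (n : ℂ)
    refine this.congr_fun (fun j => ?_)
    field_simp
  refine ⟨T / n, hsum5, ?_⟩
  rw [norm_div]
  have hTb : ‖T‖ ≤ n := by
    calc ‖T‖ ≤ ∑ k ∈ Finset.range n, ‖f (ζ ^ k * z)‖ := norm_sum_le _ _
    _ ≤ ∑ k ∈ Finset.range n, 1 := Finset.sum_le_sum (fun k _ => hb _ (hmem k))
    _ = n := by simp
  have : ‖(n:ℂ)‖ = (n:ℝ) := by simp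
  rw [this, div_le_one (by positivity)]
  exact hTb

lemma a0_eq (f : ℂ → ℂ) (a : ℕ → ℂ)
    (hf : ∀ z ∈ ball (0 : ℂ) 1, HasSum (fun s : ℕ => a s * z ^ s) (f z)) :
    f 0 = a 0 := by
  have h := hf 0 (by simp)
  have h2 : HasSum (fun s : ℕ => a s * (0:ℂ) ^ s) (a 0) := by
    have := hasSum_single (f := fun s : ℕ => a s * (0:ℂ) ^ s) 0
      (fun b hb => by simp [zero_pow hb])
    simpa using this
  exact h.unique h2

lemma wiener (f : ℂ → ℂ) (a : ℕ → ℂ)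
    (hf : ∀ z ∈ ball (0 : ℂ) 1, HasSum (fun s : ℕ => a s * z ^ s) (f z))
    (hb : ∀ z ∈ ball (0 : ℂ) 1, ‖f z‖ ≤ 1)
    (n : ℕ) (hn : 1 ≤ n) : ‖a n‖ ≤ 1 - ‖a 0‖ ^ 2 := by
  have ha0 : ‖a 0‖ ≤ 1 := by
    rw [← a0_eq f a hf]; exact hb 0 (by simp)
  -- the averaged function
  set g : ℂ → ℂ := fun w => ∑' j : ℕ, a (n * j) * w ^ j with hgdef
  have hg : ∀ w ∈ ball (0:ℂ) 1, HasSum (fun j : ℕ => a (n * j) * w ^ j) (g w) := by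
    intro w hw
    rw [mem_ball, dist_zero_right] at hw
    obtain ⟨T, hT, -⟩ := avg_lemma f a hf hb n hn w hw
    have he : g w = T := hT.tsum_eq
    rwa [he]
  have hgb : ∀ w ∈ ball (0:ℂ) 1, ‖g w‖ ≤ 1 := by
    intro w hw
    rw [mem_ball, dist_zero_right] at hw
    obtain ⟨T, hT, hTb⟩ := avg_lemma f a hf hb n hn w hw
    have : g w = T := hT.tsum_eq
    rwa [this]
  have hfps : HasFPowerSeriesOnBall g (ofScalars ℂ (fun j => a (n * j))) 0 1 :=
    hasFPS g _ hg
  have hdg : DifferentiableOn ℂ g (ball 0 1) := by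
    have h := hfps.differentiableOn
    refine h.mono ?_
    intro x hx
    rw [mem_ball, dist_zero_right] at hx
    rw [EMetric.mem_ball, edist_zero_right]
    rw [← ofReal_norm, ENNReal.ofReal_lt_one]; exact hx
  have hg0 : g 0 = a 0 := by
    have h := hg 0 (by simp)
    have h2 : HasSum (fun j : ℕ => a (n * j) * (0:ℂ) ^ j) (a 0) := by
      have := hasSum_single (f := fun j : ℕ => a (n * j) * (0:ℂ) ^ j) 0
        (fun b hb => by simp [zero_pow hb])
      simpa using this
    exact (h.unique h2)
  have hderiv : deriv g 0 = a n := by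
    rw [hfps.hasFPowerSeriesAt.deriv]
    have h := coeff_ofScalars (fun j => a (n * j)) 1
    simp only [mul_one] at h
    exact h
  rcases eq_or_lt_of_le ha0 with heq | hlt
  · -- |a 0| = 1 : g is constant by max modulus, so a n = 0
    have hmax : IsMaxOn (norm ∘ g) (ball (0:ℂ) 1) 0 := by
      intro w hw
      simp only [Function.comp_apply, Set.mem_setOf_eq, hg0]
      calc ‖g w‖ ≤ 1 := hgb w hw
      _ = ‖a 0‖ := heq.symm
    have hconst := Complex.eqOn_of_isPreconnected_of_isMaxOn_norm
      (convex_ball (0:ℂ) 1).isPreconnected isOpen_ball hdg (by simp) hmax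
    have hev : g =ᶠ[nhds (0:ℂ)] (fun _ => g 0) := by
      filter_upwards [isOpen_ball.mem_nhds (show (0:ℂ) ∈ ball (0:ℂ) 1 by simp)] with x hx
      exact hconst hx
    have : deriv g 0 = 0 := by
      rw [hev.deriv_eq, deriv_const]
    rw [hderiv] at this
    rw [this, norm_zero, ← heq]
    nlinarith [norm_nonneg (a 0)]
  · -- |a 0| < 1 : Möbius + Schwarz
    set c := a 0 with hc
    set ω : ℂ → ℂ := fun w => (g w - c) / (1 - (starRingEnd ℂ) c * g w) with hω
    have hden : ∀ w ∈ ball (0:ℂ) 1, (1 - (starRingEnd ℂ) c * g w) ≠ 0 := by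
      intro w hw h
      have h1 : ‖(starRingEnd ℂ) c * g w‖ < 1 := by
        rw [norm_mul, RCLike.norm_conj]
        calc ‖c‖ * ‖g w‖ ≤ ‖c‖ * 1 := by
              exact mul_le_mul_of_nonneg_left (hgb w hw) (norm_nonneg _)
        _ < 1 := by rw [mul_one]; exact hlt
      rw [sub_eq_zero] at h
      rw [← h] at h1
      simp at h1
    have hdω : DifferentiableOn ℂ ω (ball 0 1) := by
      apply DifferentiableOn.div
      · exact hdg.sub_const c
      · exact (differentiableOn_const _).sub (hdg.const_mul _)
      · exact hden
    have hω0 : ω 0 = 0 := by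
      simp [hω, hg0, ← hc]
    have hωb : ∀ w ∈ ball (0:ℂ) 1, ‖ω w‖ ≤ 1 := by
      intro w hw
      rw [hω]
      simp only [norm_div]
      rw [div_le_one (norm_pos_iff.mpr (hden w hw))]
      exact mobius_bound hlt.le (hgb w hw)
    -- compute deriv ω 0
    have hg_at : HasDerivAt g (a n) 0 := by
      have h1 : DifferentiableAt ℂ g 0 :=
        hdg.differentiableAt (isOpen_ball.mem_nhds (by simp))
      have := h1.hasDerivAt
      rwa [hderiv] at this
    have hnum : HasDerivAt (fun w => g w - c) (a n) 0 := hg_at.sub_const c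
    have hden_at : HasDerivAt (fun w => 1 - (starRingEnd ℂ) c * g w)
        (-((starRingEnd ℂ) c * a n)) 0 := by
      have h := (hasDerivAt_const (0:ℂ) (1:ℂ)).sub ((hg_at.const_mul ((starRingEnd ℂ) c)))
      rw [zero_sub] at h; exact h
    have hden0 : (1 - (starRingEnd ℂ) c * g 0) ≠ 0 := hden 0 (by simp)
    have hω_at : HasDerivAt ω
        ((a n * (1 - (starRingEnd ℂ) c * g 0) - (g 0 - c) * (-((starRingEnd ℂ) c * a n)))
          / (1 - (starRingEnd ℂ) c * g 0) ^ 2) 0 := hnum.div hden_at hden0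
    have hsimp : (a n * (1 - (starRingEnd ℂ) c * g 0) - (g 0 - c) * (-((starRingEnd ℂ) c * a n)))
          / (1 - (starRingEnd ℂ) c * g 0) ^ 2 = a n / (1 - (starRingEnd ℂ) c * c) := by
      rw [hg0]
      have h2 : (1 - (starRingEnd ℂ) c * c) ≠ 0 := by rw [hg0] at hden0; exact hden0
      field_simp
      ring
    rw [hsimp] at hω_at
    have hωd : ‖deriv ω 0‖ ≤ 1 := deriv_bound ω hdω hω0 hωb
    rw [hω_at.deriv] at hωd
    have hcc : (1 : ℂ) - (starRingEnd ℂ) c * c = ((1 - ‖c‖ ^ 2 : ℝ) : ℂ) := by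
      rw [mul_comm, Complex.mul_conj, Complex.normSq_eq_norm_sq]
      push_cast
      rfl
    rw [hcc] at hωd
    rw [norm_div] at hωd
    have hpos : (0:ℝ) < 1 - ‖c‖ ^ 2 := by nlinarith [norm_nonneg c]
    have : ‖((1 - ‖c‖ ^ 2 : ℝ) : ℂ)‖ = 1 - ‖c‖ ^ 2 := by
      rw [Complex.norm_real, Real.norm_eq_abs, abs_of_pos hpos]
    rw [this, div_le_one hpos] at hωd
    simpa using hωd

theorem refined_bohr
    (f : ℂ → ℂ) (a : ℕ → ℂ)
    (hf : ∀ z ∈ ball (0 : ℂ) 1, HasSum (fun s : ℕ => a s * z ^ s) (f z))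
    (hb : ∀ z ∈ ball (0 : ℂ) 1, ‖f z‖ ≤ 1)
    (r : ℝ) (hr0 : 0 ≤ r) (hr : r ≤ 1 / 3) :
    (∑' s : ℕ, ‖a s‖ * r ^ s) +
      (1 / (1 + ‖a 0‖) + r / (1 - r)) * (∑' s : ℕ, ‖a (s + 1)‖ ^ 2 * r ^ (2 * (s + 1))) ≤ 1 := by
  have hr1 : r < 1 := by linarith
  set A := ‖a 0‖ with hA
  have hA0 : 0 ≤ A := norm_nonneg _
  have hA1 : A ≤ 1 := by
    rw [hA, ← a0_eq f a hf]; exact hb 0 (by simp)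
  set c := 1 - A ^ 2 with hcdef
  have hc0 : 0 ≤ c := by nlinarith
  have hc1 : c ≤ 1 := by nlinarith
  have hW : ∀ s : ℕ, ‖a (s + 1)‖ ≤ c := fun s => wiener f a hf hb (s + 1) (by omega)
  have hcoef : ∀ s : ℕ, ‖a s‖ ≤ 1 := by
    intro s
    cases s with
    | zero => exact hA1
    | succ m => exact (hW m).trans hc1
  have hgeo : Summable (fun s : ℕ => r ^ s) := summable_geometric_of_lt_one hr0 hr1
  have hs1 : Summable (fun s : ℕ => ‖a s‖ * r ^ s) := by
    refine Summable.of_nonneg_of_le (fun s => by positivity) (fun s => ?_) hgeo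
    calc ‖a s‖ * r ^ s ≤ 1 * r ^ s := by
          exact mul_le_mul_of_nonneg_right (hcoef s) (by positivity)
    _ = r ^ s := one_mul _
  -- split the first sum
  have hsplit : (∑' s : ℕ, ‖a s‖ * r ^ s)
      = A * r ^ 0 + ∑' s : ℕ, ‖a (s + 1)‖ * r ^ (s + 1) := by
    rw [Summable.tsum_eq_zero_add hs1]
  have hr2 : r ^ 2 < 1 := by nlinarith
  have hr20 : (0:ℝ) ≤ r ^ 2 := by positivity
  have hgeo2 : Summable (fun s : ℕ => (r ^ 2) ^ s) := summable_geometric_of_lt_one hr20 hr2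
  -- bound tail of first sum
  have htail : (∑' s : ℕ, ‖a (s + 1)‖ * r ^ (s + 1)) ≤ c * (r / (1 - r)) := by
    have hmaj : Summable (fun s : ℕ => (c * r) * r ^ s) := hgeo.mul_left _
    have hle : ∀ s : ℕ, ‖a (s + 1)‖ * r ^ (s + 1) ≤ (c * r) * r ^ s := by
      intro s
      rw [pow_succ]
      calc ‖a (s + 1)‖ * (r ^ s * r) ≤ c * (r ^ s * r) := by
            exact mul_le_mul_of_nonneg_right (hW s) (by positivity)
      _ = (c * r) * r ^ s := by ring
    have hsum : Summable (fun s : ℕ => ‖a (s + 1)‖ * r ^ (s + 1)) := by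
      refine Summable.of_nonneg_of_le (fun s => by positivity) hle hmaj
    calc (∑' s : ℕ, ‖a (s + 1)‖ * r ^ (s + 1)) ≤ ∑' s : ℕ, (c * r) * r ^ s :=
          Summable.tsum_le_tsum hle hsum hmaj
    _ = (c * r) * (1 - r)⁻¹ := by rw [tsum_mul_left, tsum_geometric_of_lt_one hr0 hr1]
    _ = c * (r / (1 - r)) := by ring
  -- bound the second sum
  have hsq : (∑' s : ℕ, ‖a (s + 1)‖ ^ 2 * r ^ (2 * (s + 1))) ≤ c ^ 2 * (r ^ 2 / (1 - r ^ 2)) := by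
    have hmaj : Summable (fun s : ℕ => (c ^ 2 * r ^ 2) * (r ^ 2) ^ s) := hgeo2.mul_left _
    have hle : ∀ s : ℕ, ‖a (s + 1)‖ ^ 2 * r ^ (2 * (s + 1)) ≤ (c ^ 2 * r ^ 2) * (r ^ 2) ^ s := by
      intro s
      have h1 : r ^ (2 * (s + 1)) = (r ^ 2) ^ s * r ^ 2 := by
        rw [← pow_mul]; ring_nf
      rw [h1]
      have h2 : ‖a (s + 1)‖ ^ 2 ≤ c ^ 2 := by
        have := hW s; nlinarith [norm_nonneg (a (s + 1))]
      calc ‖a (s + 1)‖ ^ 2 * ((r ^ 2) ^ s * r ^ 2) ≤ c ^ 2 * ((r ^ 2) ^ s * r ^ 2) := by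
            exact mul_le_mul_of_nonneg_right h2 (by positivity)
      _ = (c ^ 2 * r ^ 2) * (r ^ 2) ^ s := by ring
    have hsum : Summable (fun s : ℕ => ‖a (s + 1)‖ ^ 2 * r ^ (2 * (s + 1))) :=
      Summable.of_nonneg_of_le (fun s => by positivity) hle hmaj
    calc (∑' s : ℕ, ‖a (s + 1)‖ ^ 2 * r ^ (2 * (s + 1)))
        ≤ ∑' s : ℕ, (c ^ 2 * r ^ 2) * (r ^ 2) ^ s := Summable.tsum_le_tsum hle hsum hmaj
    _ = (c ^ 2 * r ^ 2) * (1 - r ^ 2)⁻¹ := by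
        rw [tsum_mul_left, tsum_geometric_of_lt_one hr20 hr2]
    _ = c ^ 2 * (r ^ 2 / (1 - r ^ 2)) := by ring
  have hsq0 : (0:ℝ) ≤ ∑' s : ℕ, ‖a (s + 1)‖ ^ 2 * r ^ (2 * (s + 1)) :=
    tsum_nonneg (fun s => by positivity)
  set R := r / (1 - r) with hR
  set Q := r ^ 2 / (1 - r ^ 2) with hQ
  have h1r : (0:ℝ) < 1 - r := by linarith
  have h1r2 : (0:ℝ) < 1 - r ^ 2 := by nlinarith
  have hR0 : 0 ≤ R := by positivity
  have hQ0 : 0 ≤ Q := by positivity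
  have hRle : R ≤ 1/2 := by rw [hR, div_le_iff₀ h1r]; linarith
  have hQle : Q ≤ 1/8 := by rw [hQ, div_le_iff₀ h1r2]; nlinarith
  have h1A : (0:ℝ) < 1 + A := by linarith
  set K := 1 / (1 + A) + R with hK
  have hK0 : 0 ≤ K := by positivity
  have hKle : K ≤ 1 / (1 + A) + 1/2 := by rw [hK]; linarith
  have t1 : (∑' s : ℕ, ‖a s‖ * r ^ s) ≤ A + c * R := by
    rw [hsplit, pow_zero, mul_one]
    linarith
  have t2 : K * (∑' s : ℕ, ‖a (s + 1)‖ ^ 2 * r ^ (2 * (s + 1))) ≤ K * (c ^ 2 * Q) :=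
    mul_le_mul_of_nonneg_left hsq hK0
  have hcR : c * R ≤ c * (1/2) := mul_le_mul_of_nonneg_left hRle hc0
  have hc2Q : c ^ 2 * Q ≤ c ^ 2 * (1/8) := mul_le_mul_of_nonneg_left hQle (by positivity)
  have hK2 : K * (c ^ 2 * Q) ≤ (1 / (1 + A) + 1/2) * (c ^ 2 * (1/8)) :=
    mul_le_mul hKle hc2Q (by positivity) (by positivity)
  have hid : (1 / (1 + A)) * c ^ 2 = (1 - A) ^ 2 * (1 + A) := by
    rw [hcdef]; field_simp; ring
  have key : 0 ≤ (1 - A) * (A - 1) ^ 2 * (A + 5) :=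
    mul_nonneg (mul_nonneg (by linarith) (sq_nonneg _)) (by linarith)
  have halg : A + c * (1/2) + (1 / (1 + A) + 1/2) * (c ^ 2 * (1/8)) ≤ 1 := by
    have expand : (1 / (1 + A) + 1/2) * (c ^ 2 * (1/8))
        = (1 - A) ^ 2 * (1 + A) / 8 + c ^ 2 / 16 := by
      linear_combination (1/8 : ℝ) * hid
    rw [expand, hcdef]
    have hident : A + (1 - A ^ 2) * (1/2) + ((1 - A) ^ 2 * (1 + A) / 8 + (1 - A ^ 2) ^ 2 / 16)
        = 1 - (1 - A) * (A - 1) ^ 2 * (A + 5) / 16 := by ring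
    linarith [key, hident]
  calc (∑' s : ℕ, ‖a s‖ * r ^ s) + K * (∑' s : ℕ, ‖a (s + 1)‖ ^ 2 * r ^ (2 * (s + 1)))
      ≤ (A + c * R) + K * (c ^ 2 * Q) := add_le_add t1 t2
  _ ≤ (A + c * (1/2)) + (1 / (1 + A) + 1/2) * (c ^ 2 * (1/8)) := by linarith [hcR, hK2]
  _ ≤ 1 := by linarith [halg]
end

section
/- Let m, N be integers with m ≥ 0 and N ≥ m+1, and let r** be a root in (0,1) of 4r^{2N−m} + 4r^{N+1−m} − 4r^{N−m} + r^{m+2} − 2r^{m+1} + r^m = 0. Then for all a ∈ [0,1) and all r ∈ (0, r**], a r^m + (1−a²) r^N/(1−r) ≤ 1. -/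
theorem J_le_one (m N : ℕ) (hN : m + 1 ≤ N) (rs : ℝ) (hrs : rs ∈ Set.Ioo (0 : ℝ) 1)
    (hroot : 4 * rs ^ (2 * N - m) + 4 * rs ^ (N + 1 - m) - 4 * rs ^ (N - m) +
        rs ^ (m + 2) - 2 * rs ^ (m + 1) + rs ^ m = 0) :
    ∀ a ∈ Set.Ico (0 : ℝ) 1, ∀ r ∈ Set.Ioc (0 : ℝ) rs,
      a * r ^ m + (1 - a ^ 2) * r ^ N / (1 - r) ≤ 1 := by
  obtain ⟨hrs0, hrs1⟩ := hrs
  intro a ha r hr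
  obtain ⟨ha0, ha1⟩ := ha
  obtain ⟨hr0, hrrs⟩ := hr
  obtain ⟨k, rfl⟩ : ∃ k, N = m + k + 1 := ⟨N - m - 1, by omega⟩
  rw [show 2 * (m + k + 1) - m = m + 2 * k + 2 by omega,
      show (m + k + 1) + 1 - m = k + 2 by omega,
      show (m + k + 1) - m = k + 1 by omega] at hroot
  have h1rs : 0 < 1 - rs := by linarith
  have key : 4 * rs ^ (2 * m + 2 * k + 2) + 4 * rs ^ (m + k + 2) - 4 * rs ^ (m + k + 1)
      + rs ^ (2 * m + 2) - 2 * rs ^ (2 * m + 1) + rs ^ (2 * m) = 0 := by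
    linear_combination rs ^ m * hroot
  have hD : 0 ≤ (1 - rs) - a * rs ^ m * (1 - rs) - (1 - a ^ 2) * rs ^ (m + k + 1) := by
    have heq : 4 * rs ^ (m + k + 1) *
        ((1 - rs) - a * rs ^ m * (1 - rs) - (1 - a ^ 2) * rs ^ (m + k + 1)) =
        (rs ^ m * (1 - rs) - 2 * a * rs ^ (m + k + 1)) ^ 2 := by
      linear_combination (-1 : ℝ) * key
    nlinarith [sq_nonneg (rs ^ m * (1 - rs) - 2 * a * rs ^ (m + k + 1)),
      pow_pos hrs0 (m + k + 1)]
  have hstep : a * rs ^ m + (1 - a ^ 2) * rs ^ (m + k + 1) / (1 - rs) ≤ 1 := by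
    rw [← sub_nonneg]
    have expand : 1 - (a * rs ^ m + (1 - a ^ 2) * rs ^ (m + k + 1) / (1 - rs)) =
        ((1 - rs) - a * rs ^ m * (1 - rs) - (1 - a ^ 2) * rs ^ (m + k + 1)) / (1 - rs) := by
      field_simp
      ring
    rw [expand]
    exact div_nonneg hD h1rs.le
  have h1a2 : 0 ≤ 1 - a ^ 2 := by nlinarith
  have hrm : r ^ m ≤ rs ^ m := pow_le_pow_left₀ hr0.le hrrs m
  have hrN : r ^ (m + k + 1) ≤ rs ^ (m + k + 1) := pow_le_pow_left₀ hr0.le hrrs _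
  have hdiv : r ^ (m + k + 1) / (1 - r) ≤ rs ^ (m + k + 1) / (1 - rs) :=
    div_le_div₀ (pow_pos hrs0 _).le hrN h1rs (by linarith)
  have h1 : a * r ^ m ≤ a * rs ^ m := mul_le_mul_of_nonneg_left hrm ha0
  have h2 : (1 - a ^ 2) * r ^ (m + k + 1) / (1 - r) ≤
      (1 - a ^ 2) * rs ^ (m + k + 1) / (1 - rs) := by
    rw [mul_div_assoc, mul_div_assoc]
    exact mul_le_mul_of_nonneg_left hdiv h1a2
  linarith
end

section
/- For a ∈ (0,1) and r ∈ (0,1), the identity a + (1−a²) Σ_{s=1}^∞ a^{s−1} r^s + (1/(1+a) + r/(1−r)) Σ_{s=1}^∞ (1−a²)² a^{2s−2} r^{2s} = a + (1−a²) r/(1−r) holds (all series converging absolutely since 0 < ar < 1). -/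
theorem moebius_bohr_sum (a r : ℝ) (ha : a ∈ Set.Ioo (0 : ℝ) 1) (hr : r ∈ Set.Ioo (0 : ℝ) 1) :
    a + (1 - a ^ 2) * (∑' s : ℕ, a ^ s * r ^ (s + 1)) +
      (1 / (1 + a) + r / (1 - r)) *
        (∑' s : ℕ, (1 - a ^ 2) ^ 2 * a ^ (2 * s) * r ^ (2 * (s + 1))) =
    a + (1 - a ^ 2) * r / (1 - r) := by
  obtain ⟨ha0, ha1⟩ := ha
  obtain ⟨hr0, hr1⟩ := hr
  have har : a * r < 1 := by nlinarith
  have har0 : 0 ≤ a * r := by positivity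
  have h1 : (∑' s : ℕ, a ^ s * r ^ (s + 1)) = r / (1 - a * r) := by
    have : (∑' s : ℕ, a ^ s * r ^ (s + 1)) = ∑' s : ℕ, r * (a * r) ^ s := by
      congr 1; funext s; ring
    rw [this, tsum_mul_left, tsum_geometric_of_lt_one har0 har]
    ring
  have har2 : a * r * (a * r) < 1 := by nlinarith
  have har20 : 0 ≤ a * r * (a * r) := by positivity
  have h2 : (∑' s : ℕ, (1 - a ^ 2) ^ 2 * a ^ (2 * s) * r ^ (2 * (s + 1))) =
      (1 - a ^ 2) ^ 2 * (r * r) / (1 - a * r * (a * r)) := by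
    have : (∑' s : ℕ, (1 - a ^ 2) ^ 2 * a ^ (2 * s) * r ^ (2 * (s + 1))) =
        ∑' s : ℕ, ((1 - a ^ 2) ^ 2 * (r * r)) * (a * r * (a * r)) ^ s := by
      congr 1; funext s
      rw [pow_mul, pow_mul]
      ring
    rw [this, tsum_mul_left, tsum_geometric_of_lt_one har20 har2]
    ring
  rw [h1, h2]
  have e1 : (1 : ℝ) - a * r ≠ 0 := by nlinarith
  have e2 : (1 : ℝ) - r ≠ 0 := by nlinarith
  have e3 : (1 : ℝ) + a ≠ 0 := by nlinarith
  have e4 : (1 : ℝ) - a * r * (a * r) ≠ 0 := by nlinarith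
  have e5 : (1 : ℝ) - a ^ 2 * r ^ 2 ≠ 0 := by nlinarith
  field_simp
  ring
end

section
/- Let d₁, …, d_m ≥ 0 be reals satisfying 8d₁(3/8)² + Σ_{s=2}^m 2(2s−1)c_s d_s (3/8)^{2s} ≤ 1, where c_s = max_{a∈[0,1]} a(1+a)²(1−a²)^{2s−2}. Define Φ(a) = 1 + 2Σ_{s=1}^m d_s(1−a²)^{2s−1}(3/8)^{2s} − 2/(1+a) for a ∈ [0,1]. Then Φ is nondecreasing on [0,1] and Φ(a) ≤ Φ(1) = 0 for all a ∈ [0,1]. -/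
theorem Phi_nonpos (m : ℕ) (hm : 1 ≤ m) (d : ℕ → ℝ) (hd : ∀ s, 0 ≤ d s)
    (c : ℕ → ℝ)
    (hc : ∀ s, 2 ≤ s → s ≤ m →
      IsGreatest ((fun a : ℝ => a * (1 + a) ^ 2 * (1 - a ^ 2) ^ (2 * s - 2)) ''
        Set.Icc (0 : ℝ) 1) (c s))
    (hcond : 8 * d 1 * (3 / 8 : ℝ) ^ 2 +
        (∑ s ∈ Finset.Icc 2 m, 2 * (2 * (s : ℝ) - 1) * c s * d s * (3 / 8 : ℝ) ^ (2 * s)) ≤ 1) :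
    MonotoneOn
      (fun a : ℝ => 1 + 2 * (∑ s ∈ Finset.Icc 1 m, d s * (1 - a ^ 2) ^ (2 * s - 1) *
        (3 / 8 : ℝ) ^ (2 * s)) - 2 / (1 + a)) (Set.Icc (0 : ℝ) 1) ∧
    (∀ a ∈ Set.Icc (0 : ℝ) 1,
      1 + 2 * (∑ s ∈ Finset.Icc 1 m, d s * (1 - a ^ 2) ^ (2 * s - 1) *
        (3 / 8 : ℝ) ^ (2 * s)) - 2 / (1 + a) ≤ 0) ∧
    1 + 2 * (∑ s ∈ Finset.Icc 1 m, d s * (1 - (1 : ℝ) ^ 2) ^ (2 * s - 1) *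
        (3 / 8 : ℝ) ^ (2 * s)) - 2 / (1 + 1) = 0 := by
  have hderiv : ∀ x : ℝ, 1 + x ≠ 0 → HasDerivAt
      (fun a : ℝ => 1 + 2 * (∑ s ∈ Finset.Icc 1 m, d s * (1 - a ^ 2) ^ (2 * s - 1) *
        (3 / 8 : ℝ) ^ (2 * s)) - 2 / (1 + a))
      (2 * (∑ s ∈ Finset.Icc 1 m,
          d s * (((2 * s - 1 : ℕ) : ℝ) * (1 - x ^ 2) ^ (2 * s - 1 - 1) * (-(2 * x ^ 1))) *
          (3 / 8 : ℝ) ^ (2 * s)) - (0 * (1 + x) - 2 * 1) / (1 + x) ^ 2) x := by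
    intro x hx
    have h1 : HasDerivAt (fun a : ℝ => 1 - a ^ 2) (-(2 * x ^ 1)) x := by
      simpa using (hasDerivAt_pow 2 x).const_sub 1
    have hsum : HasDerivAt
        (fun a : ℝ => ∑ s ∈ Finset.Icc 1 m, d s * (1 - a ^ 2) ^ (2 * s - 1) *
          (3 / 8 : ℝ) ^ (2 * s))
        (∑ s ∈ Finset.Icc 1 m,
          d s * (((2 * s - 1 : ℕ) : ℝ) * (1 - x ^ 2) ^ (2 * s - 1 - 1) * (-(2 * x ^ 1))) *
          (3 / 8 : ℝ) ^ (2 * s)) x := by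
      apply HasDerivAt.fun_sum
      intro s _
      exact ((h1.pow (2 * s - 1)).const_mul (d s)).mul_const _
    have h2 : HasDerivAt (fun a : ℝ => 2 / (1 + a))
        ((0 * (1 + x) - 2 * 1) / (1 + x) ^ 2) x :=
      (hasDerivAt_const x (2 : ℝ)).div ((hasDerivAt_id x).const_add 1) hx
    exact ((hsum.const_mul 2).const_add 1).sub h2
  have hmono : MonotoneOn
      (fun a : ℝ => 1 + 2 * (∑ s ∈ Finset.Icc 1 m, d s * (1 - a ^ 2) ^ (2 * s - 1) *
        (3 / 8 : ℝ) ^ (2 * s)) - 2 / (1 + a)) (Set.Icc (0 : ℝ) 1) := by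
    apply monotoneOn_of_deriv_nonneg (convex_Icc 0 1)
    · intro x hx
      have hx0 : (1 : ℝ) + x ≠ 0 := by
        have := hx.1; intro h; linarith
      exact (hderiv x hx0).differentiableAt.continuousAt.continuousWithinAt
    · intro x hx
      rw [interior_Icc] at hx
      have hx0 : (1 : ℝ) + x ≠ 0 := by
        have := hx.1; intro h; linarith
      exact ((hderiv x hx0).differentiableAt).differentiableWithinAt
    · intro x hx
      rw [interior_Icc] at hx
      obtain ⟨hx0, hx1⟩ := hx
      have hxne : (1 : ℝ) + x ≠ 0 := by intro h; linarith
      rw [(hderiv x hxne).deriv]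
      -- rewrite the sum
      set T : ℝ := ∑ s ∈ Finset.Icc 1 m,
        2 * (2 * (s : ℝ) - 1) * d s * (3 / 8 : ℝ) ^ (2 * s) *
          (x * (1 + x) ^ 2 * (1 - x ^ 2) ^ (2 * s - 2)) with hT
      have e1 : (∑ s ∈ Finset.Icc 1 m,
          d s * (((2 * s - 1 : ℕ) : ℝ) * (1 - x ^ 2) ^ (2 * s - 1 - 1) * (-(2 * x ^ 1))) *
          (3 / 8 : ℝ) ^ (2 * s)) = -T / (1 + x) ^ 2 := by
        rw [hT, ← Finset.sum_neg_distrib, Finset.sum_div]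
        apply Finset.sum_congr rfl
        intro s hs
        have h1s : 1 ≤ s := (Finset.mem_Icc.mp hs).1
        have hexp : 2 * s - 1 - 1 = 2 * s - 2 := by omega
        have hcast : ((2 * s - 1 : ℕ) : ℝ) = 2 * (s : ℝ) - 1 := by
          rw [Nat.cast_sub (by omega)]; push_cast; ring
        rw [hexp, hcast]
        field_simp
      rw [e1]
      have hTle : T ≤ 1 := by
        have hsplit : Finset.Icc 1 m = insert 1 (Finset.Icc 2 m) := by
          ext k; simp only [Finset.mem_Icc, Finset.mem_insert]; omega
        have h1notin : (1 : ℕ) ∉ Finset.Icc 2 m := by simp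
        rw [hT, hsplit, Finset.sum_insert h1notin]
        have ht1 : 2 * (2 * ((1 : ℕ) : ℝ) - 1) * d 1 * (3 / 8 : ℝ) ^ (2 * 1) *
            (x * (1 + x) ^ 2 * (1 - x ^ 2) ^ (2 * 1 - 2)) ≤ 8 * d 1 * (3 / 8 : ℝ) ^ 2 := by
          have hx4 : x * (1 + x) ^ 2 ≤ 4 := by nlinarith
          have hxp : 0 ≤ x * (1 + x) ^ 2 := by positivity
          have hd1 := hd 1
          simp only [Nat.cast_one]
          norm_num
          nlinarith [sq_nonneg ((3:ℝ)/8)]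
        have hrest : (∑ s ∈ Finset.Icc 2 m,
            2 * (2 * (s : ℝ) - 1) * d s * (3 / 8 : ℝ) ^ (2 * s) *
              (x * (1 + x) ^ 2 * (1 - x ^ 2) ^ (2 * s - 2))) ≤
            ∑ s ∈ Finset.Icc 2 m, 2 * (2 * (s : ℝ) - 1) * c s * d s * (3 / 8 : ℝ) ^ (2 * s) := by
          apply Finset.sum_le_sum
          intro s hs
          obtain ⟨hs2, hsm⟩ := Finset.mem_Icc.mp hs
          have hle : x * (1 + x) ^ 2 * (1 - x ^ 2) ^ (2 * s - 2) ≤ c s :=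
            (hc s hs2 hsm).2 ⟨x, ⟨hx0.le, hx1.le⟩, rfl⟩
          have hs2' : (2 : ℝ) ≤ (s : ℝ) := by exact_mod_cast hs2
          have hK : 0 ≤ 2 * (2 * (s : ℝ) - 1) * d s * (3 / 8 : ℝ) ^ (2 * s) := by
            apply mul_nonneg (mul_nonneg (by linarith) (hd s)) (by positivity)
          have := mul_le_mul_of_nonneg_left hle hK
          linear_combination this
        linarith
      have hxs : (0 : ℝ) < (1 + x) ^ 2 := by positivity
      have heq : 2 * (-T / (1 + x) ^ 2) - (0 * (1 + x) - 2 * 1) / (1 + x) ^ 2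
          = 2 * (1 - T) / (1 + x) ^ 2 := by field_simp; ring
      rw [heq]
      apply div_nonneg (by linarith) hxs.le
  have hf1 : 1 + 2 * (∑ s ∈ Finset.Icc 1 m, d s * (1 - (1 : ℝ) ^ 2) ^ (2 * s - 1) *
        (3 / 8 : ℝ) ^ (2 * s)) - 2 / (1 + 1) = 0 := by
    have : (∑ s ∈ Finset.Icc 1 m, d s * (1 - (1 : ℝ) ^ 2) ^ (2 * s - 1) *
        (3 / 8 : ℝ) ^ (2 * s)) = 0 := by
      apply Finset.sum_eq_zero
      intro s hs
      have h1s : 1 ≤ s := (Finset.mem_Icc.mp hs).1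
      have : (1 : ℝ) - 1 ^ 2 = 0 := by norm_num
      rw [this, zero_pow (by omega)]
      ring
    rw [this]; norm_num
  refine ⟨hmono, ?_, hf1⟩
  intro a ha
  have h1mem : (1 : ℝ) ∈ Set.Icc (0 : ℝ) 1 := ⟨zero_le_one, le_refl 1⟩
  exact le_trans (hmono ha h1mem ha.2) (le_of_eq hf1)
end

section
/- Let N ≥ 1 and p ∈ (0,2], and let R be the unique root in (0,1) of 2r^N − p(1−r) = 0. For each r with R < r < 1, there exists a ∈ (0,1) such that ((a+r)/(1+ar))^p + (1−a²)r^N/(1−r) > 1. -/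
lemma rpow_lower_bound (x p : ℝ) (hx0 : 0 < x) (hx1 : x ≤ 1) (hp : 0 < p) :
    1 - p * ((1 - x) / x) ≤ x ^ p := by
  rcases le_or_gt 1 p with h1 | h1
  · have hB := one_add_mul_self_le_rpow_one_add (s := x - 1) (by linarith) h1
    have hx : (1 : ℝ) + (x - 1) = x := by ring
    rw [hx] at hB
    have key : p * (1 - x) ≤ p * ((1 - x) / x) := by
      apply mul_le_mul_of_nonneg_left _ hp.le
      rw [le_div_iff₀ hx0]; nlinarith
    linarith
  · -- p < 1 : use Bernoulli on 1/x
    set u : ℝ := (1 - x) / x with hu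
    have hu0 : 0 ≤ u := div_nonneg (by linarith) hx0.le
    have hxu : (1 : ℝ) + u = 1 / x := by rw [hu]; field_simp; ring
    have hB := rpow_one_add_le_one_add_mul_self (s := u) (by linarith) hp.le h1.le
    rw [hxu] at hB
    have hxp : 0 < x ^ p := Real.rpow_pos_of_pos hx0 p
    have hmul : x ^ p * (1 / x) ^ p = 1 := by
      rw [← Real.mul_rpow hx0.le (by positivity)]
      rw [mul_one_div, div_self hx0.ne', Real.one_rpow]
    have hpos : 0 < (1 / x) ^ p := Real.rpow_pos_of_pos (by positivity) p
    -- x ^ p = 1 / (1/x)^p ≥ 1/(1+pu) ≥ 1 - pu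
    have h2 : (1 - p * u) * (1 / x) ^ p ≤ 1 := by
      rcases le_or_gt (1 - p * u) 0 with h | h
      · exact le_trans (mul_nonpos_of_nonpos_of_nonneg h hpos.le) zero_le_one
      · calc (1 - p * u) * (1 / x) ^ p ≤ (1 - p * u) * (1 + p * u) := by
              apply mul_le_mul_of_nonneg_left hB h.le
          _ ≤ 1 := by nlinarith [sq_nonneg (p * u)]
    nlinarith [mul_le_mul_of_nonneg_right h2 hxp.le]

theorem bohr_rogosinski_sharpness (N : ℕ) (hN : 1 ≤ N) (p : ℝ) (hp : 0 < p) (hp2 : p ≤ 2)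
    (R : ℝ) (hR : R ∈ Set.Ioo (0 : ℝ) 1) (hroot : 2 * R ^ N - p * (1 - R) = 0) :
    ∀ r : ℝ, R < r → r < 1 →
      ∃ a ∈ Set.Ioo (0 : ℝ) 1,
        1 < ((a + r) / (1 + a * r)) ^ p + (1 - a ^ 2) * r ^ N / (1 - r) := by
  intro r hRr hr1
  obtain ⟨hR0, hR1⟩ := hR
  have hr0 : 0 < r := hR0.trans hRr
  -- key: p * (1 - r) < 2 * r ^ N
  have hRN : R ^ N ≤ r ^ N := pow_le_pow_left₀ hR0.le hRr.le N
  have hkey : p * (1 - r) < 2 * r ^ N := by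
    have h1 : p * (1 - r) < p * (1 - R) := by
      apply mul_lt_mul_of_pos_left _ hp; linarith
    linarith
  have hrN : 0 < r ^ N := pow_pos hr0 N
  set a : ℝ := 1 - r / 4 with ha
  have ha0 : 0 < a := by simp only [ha]; linarith
  have ha1 : a < 1 := by simp only [ha]; linarith
  refine ⟨a, ⟨ha0, ha1⟩, ?_⟩
  set x : ℝ := (a + r) / (1 + a * r) with hx
  have hden : 0 < 1 + a * r := by nlinarith
  have hnum : 0 < a + r := by linarith
  have hx0 : 0 < x := div_pos hnum hden
  have hx1 : x ≤ 1 := by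
    rw [hx, div_le_one hden]; nlinarith
  have hlb := rpow_lower_bound x p hx0 hx1 hp
  have hux : (1 - x) / x = (1 - a) * (1 - r) / (a + r) := by
    rw [hx]; field_simp; ring
  rw [hux] at hlb
  have hfinal : p * ((1 - a) * (1 - r) / (a + r)) < (1 - a ^ 2) * r ^ N / (1 - r) := by
    rw [mul_div_assoc', div_lt_div_iff₀ hnum (by linarith : (0:ℝ) < 1 - r)]
    have ha' : a = 1 - r / 4 := ha
    have h1 : p * (1 - r) * (1 - r) ≤ 2 * r ^ N * (1 - r) :=
      mul_le_mul_of_nonneg_right hkey.le (by linarith)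
    rw [ha']
    nlinarith [mul_pos hrN hr0, mul_pos (mul_pos hrN hr0) hr0, sq_nonneg r,
      mul_le_mul_of_nonneg_right h1 (le_of_lt hr0)]
  linarith
end
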